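/- arXiv:1104.2224 — 2 statements merged into one kernel-verified Lean document; each statement's English description precedes it below -/
import Mathlib

section
/- The entropy function of the Brier score, H(α) = −‖α‖²/α_+ where α_+ = Σ_x α_x, is concave and 1-homogeneous on the open positive orthant A, and its gradient at α ∈ A has x-component equal to (‖α/α_+‖² − 2α_x/α_+), the 0-homogeneous extension of the Brier score. -/
/-!
Since `‖α‖² / α₊ = ∑ₓ αₓ² / α₊`, concavity of `H` reduces to joint convexity of the perspective
`(a, s) ↦ a² / s` of the square on `s > 0` (Sedrakyan's inequality), composed with the linear maps
`α ↦ (αₓ, α₊)`. For the gradient, along a coordinate direction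
`H (α + t eₓ) = -(‖α‖² + 2 t αₓ + t²) / (α₊ + t)`, a rational function of `t` whose derivative
at `0` is `‖α‖² / α₊² - 2 αₓ / α₊`.
-/

open Finset

theorem convexOn_sq_div : ConvexOn ℝ {p : ℝ × ℝ | 0 < p.2} fun p => p.1 ^ 2 / p.2 := by
  have hconv : Convex ℝ {p : ℝ × ℝ | 0 < p.2} := fun _ hp _ hq _ _ ha hb hab =>
    convex_Ioi (0 : ℝ) hp hq ha hb hab
  refine convexOn_iff_forall_pos.2 ⟨hconv, ?_⟩
  rintro ⟨a, s⟩ (hs : 0 < s) ⟨b, t⟩ (ht : 0 < t) p q hp hq -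
  have h := sq_sum_div_le_sum_sq_div univ ![p * a, q * b] (g := ![p * s, q * t])
    (by simp [Fin.forall_fin_two, hp, hq, hs, ht])
  simp only [Fin.sum_univ_two, Matrix.cons_val_zero, Matrix.cons_val_one] at h
  convert h using 1 <;> simp only [Prod.smul_mk, Prod.mk_add_mk, smul_eq_mul]
  field_simp

theorem convexOn_finset_sum {𝕜 E β ι : Type*} [Semiring 𝕜] [PartialOrder 𝕜] [AddCommMonoid E]
    [AddCommMonoid β] [PartialOrder β] [IsOrderedAddMonoid β] [SMul 𝕜 E] [Module 𝕜 β]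
    {s : Set E} (hs : Convex 𝕜 s) (t : Finset ι) {f : ι → E → β}
    (hf : ∀ i ∈ t, ConvexOn 𝕜 s (f i)) : ConvexOn 𝕜 s fun x => ∑ i ∈ t, f i x := by
  induction t using Finset.cons_induction with
  | empty => simpa using convexOn_const 0 hs
  | cons i t hi ih =>
    simp only [sum_cons]
    exact (hf i (mem_cons_self i t)).add (ih fun j hj => hf j (mem_cons_of_mem hj))

theorem convex_setOf_forall_pos {ι : Type*} : Convex ℝ {α : ι → ℝ | ∀ i, 0 < α i} :=
  fun _ hα _ hβ _ _ ha hb hab i => convex_Ioi (0 : ℝ) (hα i) (hβ i) ha hb hab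

section

variable {X : Type*} [Fintype X]

theorem convexOn_sq_apply_div_sum (x : X) :
    ConvexOn ℝ {α : X → ℝ | ∀ x, 0 < α x} fun α => α x ^ 2 / ∑ y, α y := by
  let L : (X → ℝ) →ₗ[ℝ] ℝ × ℝ := (LinearMap.proj x).prod (∑ y, LinearMap.proj y)
  refine ((convexOn_sq_div.comp_linearMap L).subset ?_ convex_setOf_forall_pos).congr ?_
  · intro α hα
    simpa [L] using sum_pos (fun y _ => hα y) ⟨x, mem_univ x⟩
  · intro α _
    simp [L]

noncomputable def brierEntropy (α : X → ℝ) : ℝ := -(∑ x, α x ^ 2) / ∑ x, α x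

theorem concaveOn_brierEntropy : ConcaveOn ℝ {α : X → ℝ | ∀ x, 0 < α x} brierEntropy :=
  (convexOn_finset_sum convex_setOf_forall_pos univ fun x _ =>
    convexOn_sq_apply_div_sum x).neg.congr fun α _ => by simp [brierEntropy, neg_div, sum_div]

theorem brierEntropy_smul {l : ℝ} (hl : l ≠ 0) (α : X → ℝ) :
    brierEntropy (l • α) = l * brierEntropy α := by
  simp only [brierEntropy, Pi.smul_apply, smul_eq_mul, mul_pow, ← mul_sum]
  rw [sq, mul_assoc, ← mul_neg, mul_div_mul_left _ _ hl, ← mul_neg, mul_div_assoc]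

theorem differentiableAt_brierEntropy {α : X → ℝ} (h : ∑ x, α x ≠ 0) :
    DifferentiableAt ℝ brierEntropy α := by
  have : brierEntropy = fun β : X → ℝ => -(∑ x, β x ^ 2) * (∑ x, β x)⁻¹ := by
    funext β; exact div_eq_mul_inv _ _
  rw [this]
  fun_prop (disch := exact h)

variable [DecidableEq X]

theorem brierEntropy_add_smul_single (α : X → ℝ) (x : X) (t : ℝ) :
    brierEntropy (α + t • Pi.single x 1) =
      -(∑ y, α y ^ 2 + 2 * α x * t + t ^ 2) / (∑ y, α y + t) := by
  simp [brierEntropy, Pi.single_apply, add_sq, sum_add_distrib, mul_ite, ite_pow]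

theorem hasLineDerivAt_brierEntropy_single {α : X → ℝ} (h : ∑ y, α y ≠ 0) (x : X) :
    HasLineDerivAt ℝ brierEntropy ((∑ y, (α y / ∑ z, α z) ^ 2) - 2 * (α x / ∑ z, α z))
      α (Pi.single x 1) := by
  unfold HasLineDerivAt
  simp_rw [brierEntropy_add_smul_single]
  have hnum : HasDerivAt (fun t : ℝ => -(∑ y, α y ^ 2 + 2 * α x * t + t ^ 2)) (-(2 * α x)) 0 := by
    simpa using ((((hasDerivAt_id' (0 : ℝ)).const_mul (2 * α x)).const_add (∑ y, α y ^ 2)).fun_add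
      (hasDerivAt_pow 2 (0 : ℝ))).fun_neg
  have hden : HasDerivAt (fun t : ℝ => ∑ y, α y + t) 1 0 := by
    simpa using (hasDerivAt_id (0 : ℝ)).const_add (∑ y, α y)
  refine (hnum.fun_div hden (by simpa using h)).congr_deriv ?_
  simp only [div_pow, ← sum_div, add_zero, mul_zero]
  field_simp
  ring

end

/-- The Brier entropy `H(α) = -‖α‖²/α₊` is concave, 1-homogeneous, and its
gradient is the 0-homogeneous extension of the Brier score. -/
theorem stmt_9 {X : Type*} [Fintype X] [DecidableEq X] :
    ConcaveOn ℝ {α : X → ℝ | ∀ x, 0 < α x}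
      (fun α : X → ℝ => -(∑ x, α x ^ 2) / (∑ x, α x))
    ∧ (∀ l : ℝ, 0 < l → ∀ α : X → ℝ, (∀ x, 0 < α x) →
        -(∑ x, (l • α) x ^ 2) / (∑ x, (l • α) x)
          = l * (-(∑ x, α x ^ 2) / (∑ x, α x)))
    ∧ (∀ α : X → ℝ, (∀ x, 0 < α x) →
        DifferentiableAt ℝ (fun α : X → ℝ => -(∑ x, α x ^ 2) / (∑ x, α x)) α
        ∧ ∀ x, fderiv ℝ (fun α : X → ℝ => -(∑ x, α x ^ 2) / (∑ x, α x)) α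
              (Pi.single x 1)
            = (∑ y, (α y / ∑ z, α z) ^ 2) - 2 * (α x / ∑ z, α z)) := by
  refine ⟨concaveOn_brierEntropy, fun l hl α _ => brierEntropy_smul hl.ne' α, fun α hα => ?_⟩
  rcases isEmpty_or_nonempty X with _ | ⟨⟨x₀⟩⟩
  · exact ⟨(hasFDerivAt_of_subsingleton _ α).differentiableAt, isEmptyElim⟩
  have hS : ∑ y, α y ≠ 0 := (sum_pos (fun y _ => hα y) ⟨x₀, mem_univ x₀⟩).ne'
  refine ⟨differentiableAt_brierEntropy hS, fun x => ?_⟩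
  exact (differentiableAt_brierEntropy hS).lineDeriv_eq_fderiv.symm.trans
    (hasLineDerivAt_brierEntropy_single hS x).lineDeriv
end

section
/- Negative log pseudo-likelihood is a proper scoring rule: for strictly positive distributions p, q on a finite product space X = X₁ × ⋯ × X_k, defining S(x, q) = −Σ_i log q(X_i = x_i | X^{∖i} = x^{∖i}), one has Σ_x p_x S(x, q) ≥ Σ_x p_x S(x, p), with equality iff q = p. -/
/-!
The gap between the expected pseudo-log-losses of `q` and of `p` splits over the coordinates as
`∑ i, E_{x ∼ p} KL(p(X_i | x^{∖i}) ‖ q(X_i | x^{∖i}))`, and every term is nonnegative by Gibbs'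
inequality. If the gap vanishes, `p` and `q` have the same full conditionals, so `p / q` does not
change when a single coordinate is changed; hence it is constant, and equal to `1` since both are
normalised.
-/

open Finset Function Real InformationTheory

section

variable {α : Type*} [Fintype α] {a b : α → ℝ}

lemma sum_mul_log_div_eq_sum_mul_klFun (hb : ∀ x, 0 < b x) (hab : ∑ x, a x = ∑ x, b x) :
    ∑ x, a x * log (a x / b x) = ∑ x, b x * klFun (a x / b x) := by
  have hterm : ∀ x, b x * klFun (a x / b x) = a x * log (a x / b x) + (b x - a x) := by
    intro x
    have := (hb x).ne'
    rw [klFun_apply]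
    field_simp
    ring
  simp_rw [hterm, sum_add_distrib, sum_sub_distrib, hab, sub_self, add_zero]

lemma sum_mul_log_div_nonneg (ha : ∀ x, 0 ≤ a x) (hb : ∀ x, 0 < b x)
    (hab : ∑ x, a x = ∑ x, b x) : 0 ≤ ∑ x, a x * log (a x / b x) := by
  rw [sum_mul_log_div_eq_sum_mul_klFun hb hab]
  exact sum_nonneg fun x _ => mul_nonneg (hb x).le (klFun_nonneg (div_nonneg (ha x) (hb x).le))

lemma sum_mul_log_div_eq_zero_iff (ha : ∀ x, 0 ≤ a x) (hb : ∀ x, 0 < b x)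
    (hab : ∑ x, a x = ∑ x, b x) : ∑ x, a x * log (a x / b x) = 0 ↔ a = b := by
  rw [sum_mul_log_div_eq_sum_mul_klFun hb hab, sum_eq_zero_iff_of_nonneg fun x _ =>
    mul_nonneg (hb x).le (klFun_nonneg (div_nonneg (ha x) (hb x).le))]
  simp only [mem_univ, true_implies, mul_eq_zero, (hb _).ne', false_or,
    klFun_eq_zero_iff (div_nonneg (ha _) (hb _).le), div_eq_one_iff_eq (hb _).ne', funext_iff]

lemma eq_of_div_eq_of_sum_eq {p q : α → ℝ} (hq : ∀ x, 0 < q x) (hpq : ∑ x, p x = ∑ x, q x)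
    (h : ∀ x y, p x / q x = p y / q y) : q = p := by
  funext x
  have hsum : ∑ y, p y = p x / q x * ∑ y, q y := by
    rw [mul_sum]
    exact sum_congr rfl fun y _ => by rw [h x y, div_mul_cancel₀ _ (hq y).ne']
  have hq_sum : 0 < ∑ y, q y := sum_pos (fun y _ => hq y) ⟨x, mem_univ x⟩
  rw [hpq, eq_comm, mul_eq_right₀ hq_sum.ne', div_eq_one_iff_eq (hq x).ne'] at hsum
  exact hsum.symm

end

lemma eq_of_forall_update_eq {ι : Type*} [Fintype ι] [DecidableEq ι] {X : ι → Type*} {β : Type*}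
    (r : (∀ i, X i) → β) (h : ∀ i x u, r (update x i u) = r x) (x y : ∀ i, X i) : r x = r y := by
  have key : ∀ s : Finset ι, r (s.piecewise y x) = r x := by
    intro s
    induction s using Finset.induction_on with
    | empty => rw [piecewise_empty]
    | insert j s _ ih => rw [piecewise_insert, h, ih]
  simpa using (key univ).symm

noncomputable section PseudoLikelihood

variable {ι : Type*} [DecidableEq ι] {X : ι → Type*} [∀ i, Fintype (X i)]

/-- `q(X^{∖i} = x^{∖i})`. -/
def marginal (q : (∀ i, X i) → ℝ) (i : ι) (x : ∀ i, X i) : ℝ :=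
  ∑ u, q (update x i u)

def condProb (q : (∀ i, X i) → ℝ) (i : ι) (x : ∀ i, X i) : ℝ :=
  q x / marginal q i x

/-- The law with the marginal of `p` off coordinate `i` and the conditional of `q` at `i`. -/
def marginalMulCond (p q : (∀ i, X i) → ℝ) (i : ι) (x : ∀ i, X i) : ℝ :=
  marginal p i x * condProb q i x

def pseudoLogLoss [Fintype ι] (q : (∀ i, X i) → ℝ) (x : ∀ i, X i) : ℝ :=
  -∑ i, log (condProb q i x)

variable {p q : (∀ i, X i) → ℝ}

@[simp]
lemma marginal_update (q : (∀ i, X i) → ℝ) (i : ι) (x : ∀ i, X i) (u : X i) :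
    marginal q i (update x i u) = marginal q i x := by
  simp [marginal]

lemma marginal_pos (hq : ∀ x, 0 < q x) (i : ι) (x : ∀ i, X i) : 0 < marginal q i x :=
  sum_pos (fun _ _ => hq _) ⟨x i, mem_univ _⟩

lemma condProb_pos (hq : ∀ x, 0 < q x) (i : ι) (x : ∀ i, X i) : 0 < condProb q i x :=
  div_pos (hq x) (marginal_pos hq i x)

lemma marginal_condProb (hq : ∀ x, 0 < q x) (i : ι) (x : ∀ i, X i) :
    marginal (condProb q i) i x = 1 := by
  rw [marginal]
  simp_rw [condProb, marginal_update, ← sum_div]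
  exact div_self (marginal_pos hq i x).ne'

lemma marginal_marginalMulCond (hq : ∀ x, 0 < q x) (i : ι) (x : ∀ i, X i) :
    marginal (marginalMulCond p q i) i x = marginal p i x := by
  rw [marginal]
  simp_rw [marginalMulCond, marginal_update, ← mul_sum]
  change marginal p i x * marginal (condProb q i) i x = _
  rw [marginal_condProb hq, mul_one]

lemma marginalMulCond_pos (hp : ∀ x, 0 < p x) (hq : ∀ x, 0 < q x) (i : ι) (x : ∀ i, X i) :
    0 < marginalMulCond p q i x :=
  mul_pos (marginal_pos hp i x) (condProb_pos hq i x)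

lemma div_marginalMulCond (hp : ∀ x, 0 < p x) (hq : ∀ x, 0 < q x) (i : ι) (x : ∀ i, X i) :
    p x / marginalMulCond p q i x = condProb p i x / condProb q i x := by
  have := (marginal_pos hp i x).ne'
  have := (marginal_pos hq i x).ne'
  have := (hq x).ne'
  simp only [marginalMulCond, condProb]
  field_simp

lemma div_update_eq_of_condProb_eq (hp : ∀ x, 0 < p x) (hq : ∀ x, 0 < q x)
    (h : ∀ i x, condProb p i x = condProb q i x) (i : ι) (x : ∀ i, X i) (u : X i) : p (update x i u) / q (update x i u) = p x / q x := by
  have hratio : ∀ y, p y / q y = marginal p i y / marginal q i y := fun y =>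
    (div_eq_div_iff_div_eq_div' (marginal_pos hp i y).ne' (hq y).ne').mp (h i y)
  rw [hratio, hratio, marginal_update, marginal_update]

variable [Fintype ι]

lemma sum_sum_update {M : Type*} [AddCommMonoid M] (g : (∀ i, X i) → M) (i : ι) :
    ∑ x, ∑ u, g (update x i u) = Fintype.card (X i) • ∑ x, g x := by
  have hswap : Involutive fun z : (∀ j, X j) × X i => (update z.1 i z.2, z.1 i) := by
    intro z
    simp
  calc ∑ x, ∑ u, g (update x i u)
      = ∑ z : (∀ j, X j) × X i, g (update z.1 i z.2) := by rw [Fintype.sum_prod_type]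
    _ = ∑ z : (∀ j, X j) × X i, g z.1 := Fintype.sum_bijective _ hswap.bijective _ _ fun _ => rfl
    _ = Fintype.card (X i) • ∑ x, g x := by simp [Fintype.sum_prod_type, sum_const, smul_sum]

lemma sum_eq_sum_of_marginal_eq {f g : (∀ i, X i) → ℝ} (i : ι)
    (h : ∀ x, marginal f i x = marginal g i x) : ∑ x, f x = ∑ x, g x := by
  rcases isEmpty_or_nonempty (X i) with hX | hX
  · have : IsEmpty (∀ j, X j) := ⟨fun x => hX.false (x i)⟩
    simp
  · have hcard : (Fintype.card (X i) : ℝ) ≠ 0 := Nat.cast_ne_zero.mpr Fintype.card_ne_zero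
    have := sum_sum_update f i
    simp_rw [show ∀ x, ∑ u, f (update x i u) = ∑ u, g (update x i u) from h,
      sum_sum_update g i, nsmul_eq_mul] at this
    exact (mul_left_cancel₀ hcard this).symm

lemma sum_marginalMulCond (hq : ∀ x, 0 < q x) (i : ι) :
    ∑ x, marginalMulCond p q i x = ∑ x, p x :=
  sum_eq_sum_of_marginal_eq i (marginal_marginalMulCond hq i)

/-- The `p`-expected Kullback–Leibler divergence between the conditionals of `X i` given the
other coordinates under `p` and under `q`. -/
def condKL (p q : (∀ i, X i) → ℝ) (i : ι) : ℝ :=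
  ∑ x, p x * log (p x / marginalMulCond p q i x)

lemma condKL_nonneg (hp : ∀ x, 0 < p x) (hq : ∀ x, 0 < q x) (i : ι) : 0 ≤ condKL p q i :=
  sum_mul_log_div_nonneg (fun x => (hp x).le) (marginalMulCond_pos hp hq i)
    (sum_marginalMulCond hq i).symm

lemma condKL_eq_zero_iff (hp : ∀ x, 0 < p x) (hq : ∀ x, 0 < q x) (i : ι) :
    condKL p q i = 0 ↔ ∀ x, condProb p i x = condProb q i x := by
  rw [condKL, sum_mul_log_div_eq_zero_iff (fun x => (hp x).le) (marginalMulCond_pos hp hq i)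
    (sum_marginalMulCond hq i).symm, funext_iff]
  refine forall_congr' fun x => ?_
  rw [← div_eq_one_iff_eq (marginalMulCond_pos hp hq i x).ne', div_marginalMulCond hp hq,
    div_eq_one_iff_eq (condProb_pos hq i x).ne']

lemma sum_mul_pseudoLogLoss_sub (hp : ∀ x, 0 < p x) (hq : ∀ x, 0 < q x) :
    ∑ x, p x * pseudoLogLoss q x - ∑ x, p x * pseudoLogLoss p x = ∑ i, condKL p q i := by
  simp_rw [condKL]
  rw [sum_comm, ← sum_sub_distrib]
  refine sum_congr rfl fun x _ => ?_
  simp_rw [pseudoLogLoss, div_marginalMulCond hp hq,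
    log_div (condProb_pos hp _ x).ne' (condProb_pos hq _ x).ne', mul_neg, ← mul_sum,
    sum_sub_distrib]
  ring

theorem sum_mul_pseudoLogLoss_le (hp : ∀ x, 0 < p x) (hq : ∀ x, 0 < q x) :
    ∑ x, p x * pseudoLogLoss p x ≤ ∑ x, p x * pseudoLogLoss q x := by
  rw [← sub_nonneg, sum_mul_pseudoLogLoss_sub hp hq]
  exact sum_nonneg fun i _ => condKL_nonneg hp hq i

theorem sum_mul_pseudoLogLoss_eq_iff (hp : ∀ x, 0 < p x) (hq : ∀ x, 0 < q x)
    (hpq : ∑ x, p x = ∑ x, q x) :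
    ∑ x, p x * pseudoLogLoss q x = ∑ x, p x * pseudoLogLoss p x ↔ q = p := by
  refine ⟨fun h => ?_, fun h => h ▸ rfl⟩
  rw [← sub_eq_zero, sum_mul_pseudoLogLoss_sub hp hq,
    sum_eq_zero_iff_of_nonneg fun i _ => condKL_nonneg hp hq i] at h
  have hcond i := (condKL_eq_zero_iff hp hq i).mp (h i (mem_univ i))
  exact eq_of_div_eq_of_sum_eq hq hpq
    (eq_of_forall_update_eq _ (div_update_eq_of_condProb_eq hp hq hcond))

end PseudoLikelihood

theorem stmt_14_general {k : ℕ} (X : Fin k → Type*)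
    [∀ i, Fintype (X i)]
    (p q : (∀ i, X i) → ℝ)
    (hp : ∀ x, 0 < p x) (hp1 : ∑ x, p x = 1)
    (hq : ∀ x, 0 < q x) (hq1 : ∑ x, q x = 1) :
    (∑ x, p x * (-(∑ i, Real.log (q x / ∑ u, q (Function.update x i u))))
      ≥ ∑ x, p x * (-(∑ i, Real.log (p x / ∑ u, p (Function.update x i u)))))
    ∧ (∑ x, p x * (-(∑ i, Real.log (q x / ∑ u, q (Function.update x i u))))
        = ∑ x, p x * (-(∑ i, Real.log (p x / ∑ u, p (Function.update x i u))))
      ↔ q = p) :=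
  ⟨sum_mul_pseudoLogLoss_le hp hq, sum_mul_pseudoLogLoss_eq_iff hp hq (hp1.trans hq1.symm)⟩

/-- Negative log pseudo-likelihood is a strictly proper scoring rule. -/
theorem stmt_14 {k : ℕ} (X : Fin k → Type*)
    [∀ i, Fintype (X i)] [∀ i, DecidableEq (X i)] [∀ i, Nontrivial (X i)]
    (p q : (∀ i, X i) → ℝ)
    (hp : ∀ x, 0 < p x) (hp1 : ∑ x, p x = 1)
    (hq : ∀ x, 0 < q x) (hq1 : ∑ x, q x = 1) :
    (∑ x, p x * (-(∑ i, Real.log (q x / ∑ u, q (Function.update x i u))))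
      ≥ ∑ x, p x * (-(∑ i, Real.log (p x / ∑ u, p (Function.update x i u)))))
    ∧ (∑ x, p x * (-(∑ i, Real.log (q x / ∑ u, q (Function.update x i u))))
        = ∑ x, p x * (-(∑ i, Real.log (p x / ∑ u, p (Function.update x i u))))
      ↔ q = p) :=
  stmt_14_general X p q hp hp1 hq hq1
end
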